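/- arXiv:2212.14279 — 5 statements merged into one kernel-verified Lean document; each statement's English description precedes it below -/
import Mathlib

section
/- For any partition refinement S of a finite set Ω with 2^ℓ elements (a rooted binary splitting process indexed by binary strings, where the root is Ω and whenever a coordinate x is refined, S(x) is partitioned into S(x0) and S(x1)), and for any natural numbers φ and h, at any stage the total number of elements of Ω contained in terminal parts that have strictly fewer than φ elements and whose coordinate (binary string) has length at most ℓ - log₂φ - h is strictly less than 2^(ℓ-h). -/
/-- A partition refinement of a finite set `Ω`: a partial function from binary
strings (coordinates) to nonempty subsets of `Ω`, mapping the empty string to `Ω`,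
and such that whenever a child coordinate is defined, its sibling is defined and
the two children partition the parent. -/
structure PartitionRefinement (Ω : Type*) [Fintype Ω] [DecidableEq Ω] where
  S : List Bool → Option (Finset Ω)
  root : S [] = some Finset.univ
  nonempty : ∀ x v, S x = some v → v.Nonempty
  children : ∀ x, (S (x ++ [false])).isSome → (S (x ++ [true])).isSome ∧ (S x).isSome
  children' : ∀ x, (S (x ++ [true])).isSome → (S (x ++ [false])).isSome ∧ (S x).isSome
  split : ∀ x v v₀ v₁, S x = some v → S (x ++ [false]) = some v₀ →
    S (x ++ [true]) = some v₁ → Disjoint v₀ v₁ ∧ v₀ ∪ v₁ = v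

/-- A coordinate is terminal if its part is defined but neither child is. -/
def PartitionRefinement.Terminal {Ω : Type*} [Fintype Ω] [DecidableEq Ω]
    (P : PartitionRefinement Ω) (x : List Bool) : Prop :=
  (P.S x).isSome ∧ P.S (x ++ [false]) = none ∧ P.S (x ++ [true]) = none

namespace PartitionRefinement

variable {Ω : Type*} [Fintype Ω] [DecidableEq Ω] (P : PartitionRefinement Ω)

lemma isSome_of_append (x y : List Bool) (hs : (P.S (x ++ y)).isSome) :
    (P.S x).isSome := by
  induction y using List.reverseRecOn with
  | nil => simpa using hs
  | append_singleton y b ih =>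
    rw [← List.append_assoc] at hs
    cases b
    · exact ih (P.children _ hs).2
    · exact ih (P.children' _ hs).2

lemma eq_of_terminal_prefix (x y : List Bool) (hx : P.Terminal x)
    (hy : (P.S y).isSome) (hpre : x <+: y) : y = x := by
  obtain ⟨t, rfl⟩ := hpre
  cases t with
  | nil => simp
  | cons b t =>
    exfalso
    have hb : (P.S (x ++ [b])).isSome := by
      apply P.isSome_of_append (x ++ [b]) t
      simpa using hy
    cases b
    · rw [hx.2.1] at hb; simp at hb
    · rw [hx.2.2] at hb; simp at hb

end PartitionRefinement

/-- padding agrees implies prefix -/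
lemma pad_prefix (n : ℕ) (x y : List Bool) (hx : x.length ≤ n) (hy : y.length ≤ n)
    (hxy : x.length ≤ y.length)
    (hpad : (fun i : Fin n => x.getD i false) = fun i : Fin n => y.getD i false) :
    x <+: y := by
  rw [List.prefix_iff_eq_take]
  apply List.ext_getElem
  · simp [Nat.min_eq_left hxy]
  · intro i h1 h2
    have hin : i < n := lt_of_lt_of_le h1 hx
    have := congrFun hpad ⟨i, hin⟩
    simp only at this
    rw [List.getElem_take]
    rw [List.getD_eq_getElem x false (by exact h1), List.getD_eq_getElem y false (by omega)] at this
    exact this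

lemma second_inj {Ω : Type*} [DecidableEq Ω] (m : ℕ) (v w : Finset Ω) (hvw : v = w)
    (hv : v.card ≤ m) (hw : w.card ≤ m) (a b : Ω) (ha : a ∈ v) (hb : b ∈ w)
    (heq : Fin.castLE hv (v.equivFin ⟨a, ha⟩) = Fin.castLE hw (w.equivFin ⟨b, hb⟩)) :
    a = b := by
  subst hvw
  have h1 : v.equivFin ⟨a, ha⟩ = v.equivFin ⟨b, hb⟩ := Fin.castLE_injective hv heq
  have := v.equivFin.injective h1
  exact congrArg Subtype.val this


/-- The total number of elements contained in terminal parts with strictly fewer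
than `φ` elements whose coordinate has length at most `ℓ - log₂ φ - h`
is strictly less than `2 ^ (ℓ - h)`. -/
theorem stmt0 {Ω : Type*} [Fintype Ω] [DecidableEq Ω] (ℓ φ h : ℕ)
    (hΩ : Fintype.card Ω = 2 ^ ℓ) (P : PartitionRefinement Ω) :
    (Set.ncard {a : Ω | ∃ x v, P.S x = some v ∧ P.Terminal x ∧ a ∈ v ∧ v.card < φ ∧
        (x.length : ℝ) ≤ (ℓ : ℝ) - Real.logb 2 φ - h} : ℝ) < 2 ^ ((ℓ : ℝ) - h) := by
  classical
  set k : ℝ := (ℓ : ℝ) - Real.logb 2 φ - h with hk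
  set A : Set Ω := {a : Ω | ∃ x v, P.S x = some v ∧ P.Terminal x ∧ a ∈ v ∧ v.card < φ ∧
        (x.length : ℝ) ≤ k} with hAdef
  have hpos : (0:ℝ) < 2 ^ ((ℓ : ℝ) - (h:ℝ)) := Real.rpow_pos_of_pos two_pos _
  rcases Set.eq_empty_or_nonempty A with hAe | hAne
  · rw [hAe]; simpa using hpos
  obtain ⟨a₀, x₀, v₀, hS₀, hT₀, ha₀, hc₀, hl₀⟩ := hAne
  have hφ2 : 2 ≤ φ := by
    have h1 : 0 < v₀.card := Finset.card_pos.mpr (P.nonempty _ _ hS₀)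
    omega
  have hk0 : (0:ℝ) ≤ k := le_trans (by positivity) hl₀
  set n : ℕ := ⌊k⌋₊ with hn
  have hnk : (n:ℝ) ≤ k := Nat.floor_le hk0
  -- choice functions
  have hch : ∀ a ∈ A, ∃ x v, P.S x = some v ∧ P.Terminal x ∧ a ∈ v ∧ v.card < φ ∧
      (x.length : ℝ) ≤ k := fun a ha => ha
  choose! x v hSv hT hmem hcard hlen using hch
  have hlenn : ∀ a ∈ A, (x a).length ≤ n := fun a ha => Nat.le_floor (hlen a ha)
  -- the injection
  let f : Ω → (Fin n → Bool) × Fin (φ - 1) := fun a =>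
    if ha : a ∈ A then
      ((fun i : Fin n => (x a).getD i false),
        Fin.castLE (by have := hcard a ha; omega) ((v a).equivFin ⟨a, hmem a ha⟩))
    else (fun _ => false, ⟨0, by omega⟩)
  have hinj : Set.InjOn f A := by
    intro a ha b hb hfab
    simp only [f, dif_pos ha, dif_pos hb, Prod.mk.injEq] at hfab
    have hxx : x a = x b := by
      rcases le_total (x a).length (x b).length with hle | hle
      · have hpre := pad_prefix n (x a) (x b) (hlenn a ha) (hlenn b hb) hle hfab.1
        exact (P.eq_of_terminal_prefix _ _ (hT a ha)
          (by rw [hSv b hb]; rfl) hpre).symm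
      · have hpre := pad_prefix n (x b) (x a) (hlenn b hb) (hlenn a ha) hle hfab.1.symm
        exact P.eq_of_terminal_prefix _ _ (hT b hb) (by rw [hSv a ha]; rfl) hpre
    have hvv : v a = v b := by
      have := (hSv a ha).symm.trans (hxx ▸ hSv b hb)
      exact Option.some.inj this
    exact second_inj (φ - 1) (v a) (v b) hvv _ _ a b (hmem a ha) (hmem b hb) hfab.2
  haveI : Nonempty (Fin (φ - 1)) := ⟨⟨0, by omega⟩⟩
  have hcardle : A.ncard ≤ 2 ^ n * (φ - 1) := by
    have h1 : A.ncard ≤ (Set.univ : Set ((Fin n → Bool) × Fin (φ - 1))).ncard :=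
      Set.ncard_le_ncard_of_injOn f (fun a _ => Set.mem_univ _) hinj Set.finite_univ
    simpa [Set.ncard_univ, Nat.card_eq_fintype_card] using h1
  -- real arithmetic
  have hφR : (0:ℝ) < (φ:ℝ) := by positivity
  have step1 : (A.ncard : ℝ) ≤ (2:ℝ) ^ (n:ℝ) * ((φ:ℝ) - 1) := by
    calc (A.ncard : ℝ) ≤ ((2 ^ n * (φ - 1) : ℕ) : ℝ) := by exact_mod_cast hcardle
    _ = (2:ℝ) ^ (n:ℝ) * ((φ:ℝ) - 1) := by
        rw [Real.rpow_natCast]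
        push_cast [Nat.cast_sub (by omega : 1 ≤ φ)]
        ring
  have step2 : (2:ℝ) ^ (n:ℝ) * ((φ:ℝ) - 1) < (2:ℝ) ^ (n:ℝ) * (φ:ℝ) := by
    have : (0:ℝ) < (2:ℝ) ^ (n:ℝ) := Real.rpow_pos_of_pos two_pos _
    nlinarith
  have step3 : (2:ℝ) ^ (n:ℝ) * (φ:ℝ) ≤ (2:ℝ) ^ ((ℓ:ℝ) - (h:ℝ)) := by
    have hφeq : (φ:ℝ) = (2:ℝ) ^ (Real.logb 2 φ) :=
      (Real.rpow_logb two_pos (by norm_num) (by exact_mod_cast Nat.lt_of_lt_of_le Nat.zero_lt_two hφ2)).symm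
    rw [hφeq, ← Real.rpow_add two_pos]
    apply Real.rpow_le_rpow_of_exponent_le (by norm_num)
    have : (n:ℝ) ≤ (ℓ : ℝ) - Real.logb 2 φ - h := hnk
    linarith
  calc (A.ncard : ℝ) < (2:ℝ) ^ (n:ℝ) * (φ:ℝ) := lt_of_le_of_lt step1 step2
  _ ≤ (2:ℝ) ^ ((ℓ:ℝ) - (h:ℝ)) := step3
end

section
/- Let S_A, S_B be two time-indexed partition refinements of a finite set Ω with 2^ℓ elements, each equipped with an evaluation function (nondecreasing in time and in extensions of coordinates), and let C = s_1,...,s_k be an (N,φ)-sequence with respect to this pair: each s_i is (N,φ)-good at time t_{i-1} (i.e. both terminal parts containing s_i have been split fewer than N times, contain more than φ elements, and have evaluation less than 2), and becomes stale at time t_i (a containing part splits or its evaluation exceeds 2). Then k < 2·(2^ℓ/φ)·(N+1). -/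
/-- A time-indexed partition refinement of a finite set `Ω`: `S t x` is the part
with coordinate `x` (a binary string) at time `t`. The root at time `0` is `Ω`,
values are stable once defined, parts are nonempty, and whenever a child is
defined its sibling is defined, the parent was defined at the previous time,
and the two children partition the parent. -/
structure TPartitionRefinement (Ω : Type*) [Fintype Ω] [DecidableEq Ω] where
  S : ℕ → List Bool → Option (Finset Ω)
  root : S 0 [] = some Finset.univ
  stable : ∀ t t' x v, t ≤ t' → S t x = some v → S t' x = some v
  nonempty : ∀ t x v, S t x = some v → v.Nonempty
  children : ∀ t x, (S t (x ++ [false])).isSome →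
      (S t (x ++ [true])).isSome ∧ (S (t - 1) x).isSome
  children' : ∀ t x, (S t (x ++ [true])).isSome →
      (S t (x ++ [false])).isSome ∧ (S (t - 1) x).isSome
  split : ∀ t x v v₀ v₁, S t x = some v → S t (x ++ [false]) = some v₀ →
    S t (x ++ [true]) = some v₁ → Disjoint v₀ v₁ ∧ v₀ ∪ v₁ = v

variable {Ω : Type*} [Fintype Ω] [DecidableEq Ω]

/-- A coordinate is terminal at time `t` if its part is defined but neither child is. -/
def TPartitionRefinement.Terminal (P : TPartitionRefinement Ω) (t : ℕ) (x : List Bool) : Prop :=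
  (P.S t x).isSome ∧ P.S t (x ++ [false]) = none ∧ P.S t (x ++ [true]) = none

/-- An evaluation function: nonnegative, nondecreasing in time and in extensions
of coordinates. -/
def IsEvaluation (ν : ℕ → List Bool → ℝ) : Prop :=
  (∀ t x, 0 ≤ ν t x) ∧ ∀ t t' x x', t ≤ t' → x <+: x' → ν t x ≤ ν t' x'

/-- Element `a` is `(N,φ)`-good at time `t` w.r.t. a partition evaluation `(P, ν)`:
the terminal part containing `a` was split fewer than `N` times, has more than `φ`
elements, and its evaluation is less than `2`. -/
def Good (P : TPartitionRefinement Ω) (ν : ℕ → List Bool → ℝ) (N φ : ℕ)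
    (t : ℕ) (a : Ω) : Prop :=
  ∃ x v, P.S t x = some v ∧ P.Terminal t x ∧ a ∈ v ∧
    x.length < N ∧ φ < v.card ∧ ν t x < 2

/-- A part containing `a` is split at time `t` (a new containing coordinate
becomes defined at `t`). -/
def SplitsOn (P : TPartitionRefinement Ω) (t : ℕ) (a : Ω) : Prop :=
  ∃ x v, P.S t x = some v ∧ a ∈ v ∧ P.S (t - 1) x = none

/-- Some terminal part containing `a` has evaluation larger than `2` at time `t`. -/
def EvalHigh (P : TPartitionRefinement Ω) (ν : ℕ → List Bool → ℝ) (t : ℕ) (a : Ω) : Prop :=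
  ∃ x v, P.S t x = some v ∧ P.Terminal t x ∧ a ∈ v ∧ 2 < ν t x

/-- At time `t`, a part containing `a` is split, or the evaluation of a terminal
part containing `a` becomes larger than `2`. -/
def Event (P : TPartitionRefinement Ω) (ν : ℕ → List Bool → ℝ) (t : ℕ) (a : Ω) : Prop :=
  SplitsOn P t a ∨ (EvalHigh P ν t a ∧ ¬ EvalHigh P ν (t - 1) a)

/-- `a` is `(N,φ)`-good at `t` w.r.t. the pair of partition evaluations. -/
def Good2 (PA PB : TPartitionRefinement Ω) (νA νB : ℕ → List Bool → ℝ) (N φ : ℕ)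
    (t : ℕ) (a : Ω) : Prop :=
  Good PA νA N φ t a ∧ Good PB νB N φ t a

/-- `a` becomes stale after `t` at `t'` w.r.t. the pair of partition evaluations:
`t'` is the least time `> t` at which, in either refinement, a containing part is
split or a containing part's evaluation becomes larger than `2`. -/
def StaleAfterAt (PA PB : TPartitionRefinement Ω) (νA νB : ℕ → List Bool → ℝ)
    (t t' : ℕ) (a : Ω) : Prop :=
  t < t' ∧ (Event PA νA t' a ∨ Event PB νB t' a) ∧
    ∀ u, t < u → u < t' → ¬ (Event PA νA u a ∨ Event PB νB u a)

namespace StmtAux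

variable {Ω : Type*} [Fintype Ω] [DecidableEq Ω]

lemma isSome_mono (P : TPartitionRefinement Ω) {t t' : ℕ} {x : List Bool}
    (h : t ≤ t') (hs : (P.S t x).isSome) : (P.S t' x).isSome := by
  obtain ⟨v, hv⟩ := Option.isSome_iff_exists.mp hs
  exact Option.isSome_iff_exists.mpr ⟨v, P.stable t t' x v h hv⟩

lemma isSome_of_concat (P : TPartitionRefinement Ω) {t : ℕ} {x : List Bool} {c : Bool}
    (h : (P.S t (x ++ [c])).isSome) : (P.S t x).isSome := by
  have h' : (P.S (t - 1) x).isSome := by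
    cases c
    · exact (P.children t x h).2
    · exact (P.children' t x h).2
  exact isSome_mono P (Nat.sub_le t 1) h'

lemma isSome_of_prefix (P : TPartitionRefinement Ω) {t : ℕ} {x y : List Bool}
    (hp : y <+: x) (h : (P.S t x).isSome) : (P.S t y).isSome := by
  induction x using List.reverseRecOn generalizing y with
  | nil =>
    rw [List.prefix_nil.mp hp]; exact h
  | append_singleton x c ih =>
    rcases List.prefix_concat_iff.mp hp with rfl | hp'
    · exact h
    · exact ih hp' (isSome_of_concat P h)

lemma child_subset (P : TPartitionRefinement Ω) {t : ℕ} {x : List Bool} {c : Bool}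
    {v u : Finset Ω} (hc : P.S t (x ++ [c]) = some v) (hx : P.S t x = some u) : v ⊆ u := by
  cases c
  · have ht := (P.children t x (by rw [hc]; rfl)).1
    obtain ⟨v1, hv1⟩ := Option.isSome_iff_exists.mp ht
    have hsp := P.split t x u v v1 hx hc hv1
    rw [← hsp.2]; exact Finset.subset_union_left
  · have ht := (P.children' t x (by rw [hc]; rfl)).1
    obtain ⟨v0, hv0⟩ := Option.isSome_iff_exists.mp ht
    have hsp := P.split t x u v0 v hx hv0 hc
    rw [← hsp.2]; exact Finset.subset_union_right

lemma subset_of_prefix (P : TPartitionRefinement Ω) {t : ℕ} {x y : List Bool}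
    {v w : Finset Ω} (hp : y <+: x) (hx : P.S t x = some v) (hy : P.S t y = some w) :
    v ⊆ w := by
  induction x using List.reverseRecOn generalizing v with
  | nil =>
    rw [List.prefix_nil.mp hp] at hy
    rw [hx] at hy; exact (Option.some.inj hy) ▸ Finset.Subset.refl v
  | append_singleton x c ih =>
    rcases List.prefix_concat_iff.mp hp with rfl | hp'
    · rw [hx] at hy; exact (Option.some.inj hy) ▸ Finset.Subset.refl v
    · obtain ⟨u, hu⟩ := Option.isSome_iff_exists.mp (isSome_of_concat P (by rw [hx]; rfl))
      exact (child_subset P hx hu).trans (ih hp' hu)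

lemma value_unique (P : TPartitionRefinement Ω) {t t' : ℕ} {x : List Bool} {v w : Finset Ω}
    (hx : P.S t x = some v) (hy : P.S t' x = some w) : v = w := by
  rcases le_total t t' with h | h
  · have := P.stable t t' x v h hx; rw [this] at hy; exact Option.some.inj hy
  · have := P.stable t' t x w h hy; rw [this] at hx; exact (Option.some.inj hx).symm

lemma sibling_disjoint (P : TPartitionRefinement Ω) {t : ℕ} {x : List Bool}
    {v0 v1 : Finset Ω} (h0 : P.S t (x ++ [false]) = some v0)
    (h1 : P.S t (x ++ [true]) = some v1) : Disjoint v0 v1 := by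
  obtain ⟨u, hu⟩ := Option.isSome_iff_exists.mp (isSome_of_concat P (by rw [h0]; rfl))
  exact (P.split t x u v0 v1 hu h0 h1).1

lemma exists_first_diff : ∀ {x y : List Bool}, x ≠ y → x.length = y.length →
    ∃ (p : List Bool) (a b : Bool), a ≠ b ∧ p ++ [a] <+: x ∧ p ++ [b] <+: y := by
  intro x
  induction x with
  | nil =>
    intro y hne hlen
    cases y with
    | nil => exact absurd rfl hne
    | cons b y => simp at hlen
  | cons a x ih =>
    intro y hne hlen
    cases y with
    | nil => simp at hlen
    | cons b y =>
      by_cases hab : a = b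
      · subst hab
        have hxy : x ≠ y := fun h => hne (by rw [h])
        obtain ⟨p, a', b', h1, ⟨r1, hr1⟩, ⟨r2, hr2⟩⟩ := ih hxy (by simpa using hlen)
        exact ⟨a :: p, a', b', h1, ⟨r1, by simp [← hr1]⟩, ⟨r2, by simp [← hr2]⟩⟩
      · exact ⟨[], a, b, hab, ⟨x, rfl⟩, ⟨y, rfl⟩⟩

lemma disjoint_of_ne (P : TPartitionRefinement Ω) {t t' : ℕ} {x y : List Bool}
    {v w : Finset Ω} (hne : x ≠ y) (hlen : x.length = y.length)
    (hx : P.S t x = some v) (hy : P.S t' y = some w) : Disjoint v w := by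
  set u := max t t' with hu
  have hx' : P.S u x = some v := P.stable t u x v (le_max_left _ _) hx
  have hy' : P.S u y = some w := P.stable t' u y w (le_max_right _ _) hy
  obtain ⟨p, a, b, hab, hpx, hpy⟩ := exists_first_diff hne hlen
  obtain ⟨va, hva⟩ := Option.isSome_iff_exists.mp
    (isSome_of_prefix P hpx (by rw [hx']; rfl))
  obtain ⟨vb, hvb⟩ := Option.isSome_iff_exists.mp
    (isSome_of_prefix P hpy (by rw [hy']; rfl))
  have hd : Disjoint va vb := by
    cases a <;> cases b
    · exact absurd rfl hab
    · exact sibling_disjoint P hva hvb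
    · exact (sibling_disjoint P hvb hva).symm
    · exact absurd rfl hab
  exact hd.mono (subset_of_prefix P hpx hx' hva) (subset_of_prefix P hpy hy' hvb)

lemma comparable (P : TPartitionRefinement Ω) {t : ℕ} {x y : List Bool}
    {v w : Finset Ω} {a : Ω} (hx : P.S t x = some v) (hy : P.S t y = some w)
    (hax : a ∈ v) (hay : a ∈ w) : x <+: y ∨ y <+: x := by
  have aux : ∀ {x y : List Bool} {v w : Finset Ω}, x.length ≤ y.length →
      P.S t x = some v → P.S t y = some w → a ∈ v → a ∈ w → x <+: y := by
    intro x y v w hl hx hy hax hay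
    have hp : y.take x.length <+: y := List.take_prefix _ _
    obtain ⟨u, hu⟩ := Option.isSome_iff_exists.mp
      (isSome_of_prefix P hp (by rw [hy]; rfl))
    have hxeq : x = y.take x.length := by
      by_contra hne
      have hlt : x.length = (y.take x.length).length := by
        rw [List.length_take]; omega
      have hd := disjoint_of_ne P hne hlt hx hu
      exact Finset.disjoint_left.mp hd hax (subset_of_prefix P hp hy hu hay)
    rw [hxeq]; exact hp
  rcases le_total x.length y.length with h | h
  · exact Or.inl (aux h hx hy hax hay)
  · exact Or.inr (aux h hy hx hay hax)

lemma charge {P : TPartitionRefinement Ω} {ν : ℕ → List Bool → ℝ}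
    {t t' : ℕ} (htt' : t < t') {x : List Bool} {v : Finset Ω} {a : Ω}
    (hx : P.S t x = some v) (ha : a ∈ v) (hev : Event P ν t' a) :
    (∃ c, (P.S t' (x ++ [c])).isSome) ∨ 2 < ν t' x := by
  have hx' : P.S t' x = some v := P.stable t t' x v htt'.le hx
  rcases hev with ⟨y, w, hy, haw, hnew⟩ | ⟨⟨y, w, hy, hyterm, haw, h2⟩, -⟩
  · -- split event
    have hnotdef : ¬ (P.S t y).isSome := by
      intro h
      have h2 := isSome_mono P (by omega : t ≤ t' - 1) h
      rw [hnew] at h2; simp at h2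
    rcases comparable P hx' hy ha haw with hxy | hyx
    · have hne : x ≠ y := by
        intro h; exact hnotdef (h ▸ (by rw [hx]; rfl))
      obtain ⟨r, hr⟩ := hxy
      match r, hr with
      | [], hr => exact absurd (by simpa using hr) hne
      | c :: r', hr =>
        exact Or.inl ⟨c, isSome_of_prefix P (⟨r', by simp [← hr]⟩ : x ++ [c] <+: y)
          (by rw [hy]; rfl)⟩
    · exact absurd (isSome_of_prefix P hyx (by rw [hx]; rfl)) hnotdef
  · -- eval high event
    rcases comparable P hx' hy ha haw with hxy | hyx
    · rcases eq_or_ne x y with rfl | hne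
      · exact Or.inr h2
      · obtain ⟨r, hr⟩ := hxy
        match r, hr with
        | [], hr => exact absurd (by simpa using hr) hne
        | c :: r', hr =>
          exact Or.inl ⟨c, isSome_of_prefix P (⟨r', by simp [← hr]⟩ : x ++ [c] <+: y)
            (by rw [hy]; rfl)⟩
    · rcases eq_or_ne y x with rfl | hne
      · exact Or.inr h2
      · obtain ⟨r, hr⟩ := hyx
        match r, hr with
        | [], hr => exact absurd (by simpa using hr) hne
        | c :: r', hr =>
          have hc : (P.S t' (y ++ [c])).isSome :=
            isSome_of_prefix P (⟨r', by simp [← hr]⟩ : y ++ [c] <+: x) (by rw [hx']; rfl)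
          exfalso
          cases c
          · rw [hyterm.2.1] at hc; simp at hc
          · rw [hyterm.2.2] at hc; simp at hc

end StmtAux

open StmtAux in
/-- An `(N,φ)`-sequence `s₁, …, s_k` w.r.t. a pair of partition evaluations of a set
with `2 ^ ℓ` elements has fewer than `2 * (2^ℓ / φ) * (N + 1)` elements. -/
theorem stmt3 {Ω : Type*} [Fintype Ω] [DecidableEq Ω] (ℓ N φ k : ℕ) (hφ : 0 < φ)
    (hΩ : Fintype.card Ω = 2 ^ ℓ)
    (PA PB : TPartitionRefinement Ω) (νA νB : ℕ → List Bool → ℝ)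
    (hνA : IsEvaluation νA) (hνB : IsEvaluation νB)
    (s : Fin k → Ω) (τ : Fin (k + 1) → ℕ) (hτ0 : τ 0 = 0)
    (hgood : ∀ i : Fin k, Good2 PA PB νA νB N φ (τ i.castSucc) (s i))
    (hstale : ∀ i : Fin k, (i : ℕ) + 1 < k →
      StaleAfterAt PA PB νA νB (τ i.castSucc) (τ i.succ) (s i)) :
    (k : ℝ) < 2 * ((2 : ℝ) ^ ℓ / φ) * (N + 1) := by
  classical
  have hφR : (0:ℝ) < (φ:ℝ) := by exact_mod_cast hφ
  rcases Nat.eq_zero_or_pos k with rfl | hk1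
  · have hdiv : (0:ℝ) < (2:ℝ)^ℓ / (φ:ℝ) := div_pos (by positivity) hφR
    have hN1 : (0:ℝ) < (N:ℝ) + 1 := by positivity
    simpa using mul_pos (mul_pos two_pos hdiv) hN1
  -- basic facts from goodness of s₀
  obtain ⟨⟨x0, v0, hS0, -, -, hlen0, hcard0, -⟩, -⟩ := hgood ⟨0, hk1⟩
  have hN1 : 1 ≤ N := by omega
  have hφℓ : φ + 1 ≤ 2 ^ ℓ := by
    have h := Finset.card_le_univ v0
    rw [hΩ] at h
    omega
  -- refinement pair as a function of Bool
  set Pb : Bool → TPartitionRefinement Ω := fun bb => cond bb PB PA with hPbdef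
  set νb : Bool → ℕ → List Bool → ℝ := fun bb => cond bb νB νA with hνbdef
  have hνb : ∀ bb, IsEvaluation (νb bb) := by
    intro bb; cases bb
    · exact hνA
    · exact hνB
  -- ℕ-indexed times
  set τ' : ℕ → ℕ := fun n => if h : n ≤ k then τ ⟨n, Nat.lt_succ_of_le h⟩ else 0 with hτ'def
  have hτeq : ∀ (n : ℕ) (h : n ≤ k), τ' n = τ ⟨n, Nat.lt_succ_of_le h⟩ := by
    intro n h; simp [hτ'def, h]
  have hgood' : ∀ (n : ℕ) (h : n < k), Good2 PA PB νA νB N φ (τ' n) (s ⟨n, h⟩) := by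
    intro n h
    rw [hτeq n h.le]
    exact hgood ⟨n, h⟩
  have hmono : ∀ m : ℕ, m + 1 < k → τ' m < τ' (m + 1) := by
    intro m hm
    have h := (hstale ⟨m, by omega⟩ (by simpa using hm)).1
    rw [hτeq m (by omega), hτeq (m+1) (by omega)]
    exact h
  have hchain : ∀ i j : ℕ, i < j → j < k → τ' (i + 1) ≤ τ' j := by
    intro i j hij hjk
    induction j with
    | zero => omega
    | succ j ih =>
      rcases Nat.lt_or_ge i j with h | h
      · exact le_trans (ih h (by omega)) (hmono j hjk).le
      · have : i = j := by omega
        subst this; exact le_refl _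
  -- charging
  have key : ∀ i : Fin (k - 1), ∃ (bb : Bool) (x : List Bool) (v : Finset Ω),
      (Pb bb).S (τ' (i : ℕ)) x = some v ∧ (Pb bb).Terminal (τ' (i : ℕ)) x ∧
      x.length < N ∧ φ < v.card ∧ νb bb (τ' (i : ℕ)) x < 2 ∧
      ((∃ c, ((Pb bb).S (τ' ((i : ℕ) + 1)) (x ++ [c])).isSome) ∨
        2 < νb bb (τ' ((i : ℕ) + 1)) x) := by
    intro i
    have hik : (i : ℕ) + 1 < k := by omega
    have hst := hstale ⟨(i : ℕ), by omega⟩ (by simpa using hik)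
    have hev := hst.2.1
    rw [show τ (Fin.succ ⟨(i : ℕ), by omega⟩) = τ' ((i : ℕ) + 1) from
      (hτeq ((i : ℕ) + 1) (by omega)).symm] at hev
    have hg := hgood' (i : ℕ) (by omega)
    rcases hev with hA | hB
    · obtain ⟨⟨x, v, hS, hT, hmem, hlen, hcard, hν2⟩, -⟩ := hg
      exact ⟨false, x, v, hS, hT, hlen, hcard, hν2,
        charge (hmono (i : ℕ) hik) hS hmem hA⟩
    · obtain ⟨-, ⟨x, v, hS, hT, hmem, hlen, hcard, hν2⟩⟩ := hg
      exact ⟨true, x, v, hS, hT, hlen, hcard, hν2,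
        charge (hmono (i : ℕ) hik) hS hmem hB⟩
  choose b xf vf hS hT hlen hcard hν2 hev2 using key
  set g : Fin (k - 1) → Bool × ℕ × Finset Ω := fun i => (b i, (xf i).length, vf i) with hgdef
  have hxeq : ∀ i j : Fin (k - 1), b i = b j → (xf i).length = (xf j).length →
      vf i = vf j → xf i = xf j := by
    intro i j hb hl hv
    by_contra hne
    have hSj : (Pb (b i)).S (τ' (j : ℕ)) (xf j) = some (vf j) := by rw [hb]; exact hS j
    have hd : Disjoint (vf i) (vf j) := disjoint_of_ne (Pb (b i)) hne hl (hS i) hSj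
    rw [hv, disjoint_self] at hd
    obtain ⟨a, ha⟩ := (Pb (b j)).nonempty _ _ _ (hS j)
    rw [hd] at ha
    simp at ha
  have haux : ∀ i j : Fin (k - 1), (i : ℕ) < (j : ℕ) → g i ≠ g j := by
    intro i j hij heq
    simp only [hgdef, Prod.mk.injEq] at heq
    obtain ⟨hb, hl, hv⟩ := heq
    have hxe := hxeq i j hb hl hv
    have hle : τ' ((i : ℕ) + 1) ≤ τ' (j : ℕ) := hchain _ _ hij (by omega)
    rcases hev2 i with ⟨c, hc⟩ | hhigh
    · have hdef : ((Pb (b i)).S (τ' (j : ℕ)) (xf i ++ [c])).isSome :=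
        isSome_mono _ hle hc
      have hTj := hT j
      rw [← hb, ← hxe] at hTj
      cases c
      · rw [hTj.2.1] at hdef; simp at hdef
      · rw [hTj.2.2] at hdef; simp at hdef
    · have hν2j := hν2 j
      rw [← hb, ← hxe] at hν2j
      have hmo := (hνb (b i)).2 (τ' ((i : ℕ) + 1)) (τ' (j : ℕ)) (xf i) (xf i) hle
        (List.prefix_refl _)
      linarith
  have hginj : Function.Injective g := by
    intro i j h
    by_contra hne
    rcases Nat.lt_or_ge (i : ℕ) (j : ℕ) with hlt | hge
    · exact haux i j hlt h
    · have : (j : ℕ) < (i : ℕ) := by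
        rcases Nat.lt_or_ge (j : ℕ) (i : ℕ) with h' | h'
        · exact h'
        · exact absurd (Fin.ext (by omega)) hne
      exact haux j i this h.symm
  -- counting
  set A : Finset (Bool × ℕ × Finset Ω) := Finset.image g Finset.univ with hAdef
  have hAcard : A.card = k - 1 := by
    rw [hAdef, Finset.card_image_of_injective _ hginj, Finset.card_univ, Fintype.card_fin]
  have hfib : A.card = ∑ q ∈ (Finset.univ : Finset Bool) ×ˢ Finset.range N,
      (A.filter (fun p => (p.1, p.2.1) = q)).card := by
    apply Finset.card_eq_sum_card_fiberwise
    intro p hp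
    rw [hAdef] at hp
    obtain ⟨i, -, rfl⟩ := Finset.mem_image.mp hp
    exact Finset.mem_product.mpr ⟨Finset.mem_univ _, Finset.mem_range.mpr (hlen i)⟩
  have hbound : ∀ q ∈ (Finset.univ : Finset Bool) ×ˢ Finset.range N,
      (A.filter (fun p => (p.1, p.2.1) = q)).card * (φ + 1) ≤ 2 ^ ℓ := by
    intro q _
    set F := A.filter (fun p => (p.1, p.2.1) = q) with hFdef
    have hmemF : ∀ p ∈ F, (∃ i : Fin (k - 1), g i = p) ∧ p.1 = q.1 ∧ p.2.1 = q.2 := by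
      intro p hp
      rw [hFdef, Finset.mem_filter] at hp
      obtain ⟨hpA, hpq⟩ := hp
      rw [hAdef] at hpA
      obtain ⟨i, -, hi⟩ := Finset.mem_image.mp hpA
      exact ⟨⟨i, hi⟩, (Prod.mk.injEq _ _ _ _).mp hpq |>.1,
        (Prod.mk.injEq _ _ _ _).mp hpq |>.2⟩
    set W : Finset (Finset Ω) := F.image (fun p => p.2.2) with hWdef
    have hFW : F.card = W.card := by
      rw [hWdef]
      refine (Finset.card_image_of_injOn ?_).symm
      intro p1 h1 p2 h2 he
      obtain ⟨-, e11, e12⟩ := hmemF p1 h1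
      obtain ⟨-, e21, e22⟩ := hmemF p2 h2
      exact Prod.ext (e11.trans e21.symm) (Prod.ext (e12.trans e22.symm) he)
    have hWprop : ∀ w ∈ W, ∃ i : Fin (k - 1), vf i = w ∧ b i = q.1 ∧
        (xf i).length = q.2 := by
      intro w hw
      rw [hWdef] at hw
      obtain ⟨p, hp, hpw⟩ := Finset.mem_image.mp hw
      obtain ⟨⟨i, hgi⟩, e1, e2⟩ := hmemF p hp
      refine ⟨i, ?_, ?_, ?_⟩
      · rw [← hpw, ← hgi]
      · rw [← e1, ← hgi]
      · rw [← e2, ← hgi]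
    have hWdisj : ∀ w1 ∈ W, ∀ w2 ∈ W, w1 ≠ w2 → Disjoint (id w1) (id w2) := by
      intro w1 hw1 w2 hw2 hne
      obtain ⟨i, rfl, hb1, hl1⟩ := hWprop w1 hw1
      obtain ⟨j, rfl, hb2, hl2⟩ := hWprop w2 hw2
      have hxne : xf i ≠ xf j := by
        intro hxe
        have hSj : (Pb (b i)).S (τ' (j : ℕ)) (xf i) = some (vf j) := by
          rw [hxe, hb1.trans hb2.symm]; exact hS j
        exact hne (value_unique (Pb (b i)) (hS i) hSj)
      have hSj : (Pb (b i)).S (τ' (j : ℕ)) (xf j) = some (vf j) := by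
        rw [hb1.trans hb2.symm]; exact hS j
      exact disjoint_of_ne (Pb (b i)) hxne (hl1.trans hl2.symm) (hS i) hSj
    have hWcard : ∀ w ∈ W, φ + 1 ≤ w.card := by
      intro w hw
      obtain ⟨i, rfl, -, -⟩ := hWprop w hw
      have := hcard i; omega
    calc F.card * (φ + 1) = W.card * (φ + 1) := by rw [hFW]
      _ = ∑ _w ∈ W, (φ + 1) := by rw [Finset.sum_const, smul_eq_mul, mul_comm]
      _ ≤ ∑ w ∈ W, w.card := Finset.sum_le_sum hWcard
      _ = (W.biUnion id).card := (Finset.card_biUnion hWdisj).symm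
      _ ≤ Fintype.card Ω := Finset.card_le_univ _
      _ = 2 ^ ℓ := hΩ
  have hkey : (k - 1) * (φ + 1) ≤ 2 * N * 2 ^ ℓ := by
    calc (k - 1) * (φ + 1) = A.card * (φ + 1) := by rw [hAcard]
      _ = (∑ q ∈ (Finset.univ : Finset Bool) ×ˢ Finset.range N,
          (A.filter (fun p => (p.1, p.2.1) = q)).card) * (φ + 1) := by rw [← hfib]
      _ = ∑ q ∈ (Finset.univ : Finset Bool) ×ˢ Finset.range N,
          (A.filter (fun p => (p.1, p.2.1) = q)).card * (φ + 1) := Finset.sum_mul _ _ _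
      _ ≤ ∑ _q ∈ (Finset.univ : Finset Bool) ×ˢ Finset.range N, 2 ^ ℓ :=
          Finset.sum_le_sum hbound
      _ = 2 * N * 2 ^ ℓ := by
          rw [Finset.sum_const, smul_eq_mul, Finset.card_product, Finset.card_univ,
            Finset.card_range]
          simp [Fintype.card_bool]
  -- final arithmetic
  have hkφ : k * φ < 2 * 2 ^ ℓ * (N + 1) := by
    obtain ⟨k', rfl⟩ : ∃ k', k = k' + 1 := ⟨k - 1, by omega⟩
    simp only [Nat.add_sub_cancel] at hkey
    nlinarith [hkey, hφℓ, Nat.mul_le_mul_left k' (Nat.le_succ φ)]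
  have hkφR : (k : ℝ) * (φ : ℝ) < 2 * 2 ^ ℓ * ((N : ℝ) + 1) := by exact_mod_cast hkφ
  rw [show 2 * ((2 : ℝ) ^ ℓ / (φ : ℝ)) * ((N : ℝ) + 1)
      = (2 * 2 ^ ℓ * ((N : ℝ) + 1)) / (φ : ℝ) by ring, lt_div_iff₀ hφR]
  exact hkφR
end

section
/- Under the same setup as the (N,φ)-sequence bound, if additionally both partition refinements S_A, S_B have the property that whenever a part is split it is split into two parts of equal cardinality, then any (N,φ)-sequence C satisfies |C| ≤ 6·(2^ℓ/φ). -/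
variable {Ω : Type*} [Fintype Ω] [DecidableEq Ω]

/-!
Every element `s i` that is followed by another one charges a pair (refinement, coordinate):
the terminal part witnessing that `s i` is good at `t_{i-1}`, taken in a refinement where the
event at `t_i` happens. At `t_i` that part has been split or its evaluation exceeds `2`;
parts are never merged and evaluations never decrease, so it can never again be terminal with
evaluation below `2`, and the charged pairs are distinct. A charged part has more than `φ`
elements, while half-splitting gives a part at depth `d` exactly `2^(ℓ-d)` elements; hence
`φ 2^d < 2^ℓ`, and fewer than `2 · 2^ℓ / φ` binary strings have such a length. So
`|C| - 1 ≤ 4 · 2^ℓ / φ`.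
-/

namespace TPartitionRefinement

variable (P : TPartitionRefinement Ω)

theorem isSome_of_le {t t' : ℕ} {x : List Bool} (htt' : t ≤ t') (hx : (P.S t x).isSome) :
    (P.S t' x).isSome := by
  obtain ⟨v, hv⟩ := Option.isSome_iff_exists.1 hx
  simp [P.stable t t' x v htt' hv]

theorem exists_sibling {t : ℕ} {z : List Bool} {b : Bool} {v : Finset Ω}
    (h : P.S t (z ++ [b]) = some v) :
    ∃ w v', P.S t z = some w ∧ P.S t (z ++ [!b]) = some v' ∧ Disjoint v v' ∧ v ∪ v' = w := by
  have hb : (P.S t (z ++ [b])).isSome := by simp [h]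
  obtain ⟨hsib, hz⟩ : (P.S t (z ++ [!b])).isSome ∧ (P.S (t - 1) z).isSome := by
    cases b
    · exact P.children t z hb
    · exact P.children' t z hb
  obtain ⟨v', hv'⟩ := Option.isSome_iff_exists.1 hsib
  obtain ⟨w, hw⟩ := Option.isSome_iff_exists.1 hz
  have hwt := P.stable _ t z w (Nat.sub_le t 1) hw
  refine ⟨w, v', hwt, hv', ?_⟩
  cases b
  · exact P.split t z w v v' hwt h hv'
  · obtain ⟨hdisj, hunion⟩ := P.split t z w v' v hwt hv' h
    exact ⟨hdisj.symm, Finset.union_comm v v' ▸ hunion⟩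

theorem exists_superset_of_prefix {t : ℕ} {x y : List Bool} {w : Finset Ω}
    (hxy : x <+: y) (hy : P.S t y = some w) : ∃ v, P.S t x = some v ∧ w ⊆ v := by
  obtain ⟨s, rfl⟩ := hxy
  induction s using List.reverseRecOn generalizing w with
  | nil => exact ⟨w, by simpa using hy, subset_rfl⟩
  | append_singleton s b ih =>
    rw [← List.append_assoc] at hy
    obtain ⟨w', v', hw', -, -, rfl⟩ := P.exists_sibling hy
    obtain ⟨v, hv, hsub⟩ := ih hw'
    exact ⟨v, hv, Finset.subset_union_left.trans hsub⟩

theorem eq_of_mem_of_length_eq {t : ℕ} {a : Ω} {x y : List Bool} {v w : Finset Ω}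
    (hx : P.S t x = some v) (hy : P.S t y = some w) (hav : a ∈ v) (haw : a ∈ w)
    (hlen : x.length = y.length) : x = y := by
  induction x using List.reverseRecOn generalizing y v w with
  | nil => exact (List.length_eq_zero_iff.1 hlen.symm).symm
  | append_singleton x b ih =>
    obtain ⟨y, c, rfl⟩ : ∃ y' c, y = y' ++ [c] := by
      rcases List.eq_nil_or_concat y with rfl | ⟨y', c, rfl⟩
      · simp at hlen
      · exact ⟨y', c, by simp⟩
    obtain ⟨px, sx, hpx, hsx, hdisj, rfl⟩ := P.exists_sibling hx
    obtain ⟨py, _, hpy, -, -, rfl⟩ := P.exists_sibling hy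
    obtain rfl : x = y := ih hpx hpy (Finset.mem_union_left _ hav)
      (Finset.mem_union_left _ haw) (by simpa using hlen)
    obtain rfl | rfl : c = b ∨ c = !b := by cases b <;> cases c <;> simp
    · rfl
    · rw [hsx, Option.some_inj] at hy
      exact absurd (hy ▸ haw) (Finset.disjoint_left.1 hdisj hav)

theorem prefix_or_prefix_of_mem {t : ℕ} {a : Ω} {x y : List Bool} {v w : Finset Ω}
    (hx : P.S t x = some v) (hy : P.S t y = some w) (hav : a ∈ v) (haw : a ∈ w) :
    x <+: y ∨ y <+: x := by
  wlog hxy : x.length ≤ y.length generalizing x y v w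
  · exact (this hy hx haw hav (by omega)).symm
  obtain ⟨u, hu, hwu⟩ := P.exists_superset_of_prefix (List.take_prefix x.length y) hy
  have := P.eq_of_mem_of_length_eq hu hx (hwu haw) hav (by simp [hxy])
  exact .inl (this ▸ List.take_prefix x.length y)

theorem eq_of_terminal_of_prefix {t : ℕ} {x y : List Bool} {w : Finset Ω}
    (hx : P.Terminal t x) (hxy : x <+: y) (hy : P.S t y = some w) : x = y := by
  obtain ⟨_ | ⟨d, s⟩, rfl⟩ := hxy
  · simp
  obtain ⟨u, hu, -⟩ := P.exists_superset_of_prefix (x := x ++ [d]) ⟨s, by simp⟩ hy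
  cases d
  · simp [hx.2.1] at hu
  · simp [hx.2.2] at hu

theorem eq_of_terminal_of_mem {t : ℕ} {a : Ω} {x y : List Bool} {v w : Finset Ω}
    (hx : P.S t x = some v) (hy : P.S t y = some w)
    (htx : P.Terminal t x) (hty : P.Terminal t y) (hav : a ∈ v) (haw : a ∈ w) : x = y := by
  rcases P.prefix_or_prefix_of_mem hx hy hav haw with h | h
  · exact P.eq_of_terminal_of_prefix htx h hy
  · exact (P.eq_of_terminal_of_prefix hty h hx).symm

/-- The coordinate created at time `t` is comparable with `x`; it cannot be a prefix of `x`,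
whose prefixes all existed at time `t - 1`, so it extends `x`. -/
theorem not_terminal_of_splitsOn {t : ℕ} {a : Ω} {x : List Bool} {v : Finset Ω}
    (hx : P.S (t - 1) x = some v) (ha : a ∈ v) (hs : SplitsOn P t a) : ¬ P.Terminal t x := by
  obtain ⟨z, c, hz, hac, hznone⟩ := hs
  intro hterm
  rcases P.prefix_or_prefix_of_mem hz (P.stable _ t x v (Nat.sub_le t 1) hx) hac ha with h | h
  · obtain ⟨u, hu, -⟩ := P.exists_superset_of_prefix h hx
    simp [hu] at hznone
  · obtain rfl := P.eq_of_terminal_of_prefix hterm h hz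
    simp [hx] at hznone

theorem terminal_succ {u : ℕ} {a : Ω} {x : List Bool} {v : Finset Ω}
    (hx : P.S u x = some v) (ha : a ∈ v) (hterm : P.Terminal u x)
    (hs : ¬ SplitsOn P (u + 1) a) : P.Terminal (u + 1) x := by
  have hx' := P.stable u (u + 1) x v u.le_succ hx
  refine ⟨by simp [hx'], ?_⟩
  by_contra hchild
  obtain ⟨b, c, hc⟩ : ∃ b c, P.S (u + 1) (x ++ [b]) = some c := by
    rcases not_and_or.1 hchild with h | h
    · exact ⟨false, Option.ne_none_iff_exists'.1 h⟩
    · exact ⟨true, Option.ne_none_iff_exists'.1 h⟩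
  obtain ⟨w, c', hw, hc', -, hunion⟩ := P.exists_sibling hc
  rw [hx', Option.some_inj] at hw
  have hnone : ∀ b', P.S u (x ++ [b']) = none := by
    rintro (_ | _)
    exacts [hterm.2.1, hterm.2.2]
  rcases Finset.mem_union.1 (hunion ▸ hw ▸ ha) with hac | hac
  · exact hs ⟨_, _, hc, hac, hnone b⟩
  · exact hs ⟨_, _, hc', hac, hnone _⟩

theorem terminal_of_forall_not_splitsOn {τ t : ℕ} {a : Ω} {x : List Bool} {v : Finset Ω}
    (hx : P.S τ x = some v) (ha : a ∈ v) (hterm : P.Terminal τ x) (hτt : τ ≤ t)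
    (hquiet : ∀ u, τ < u → u ≤ t → ¬ SplitsOn P u a) : P.Terminal t x := by
  induction t, hτt using Nat.le_induction with
  | base => exact hterm
  | succ u hτu ih =>
    exact P.terminal_succ (P.stable τ u x v hτu hx) ha
      (ih fun u' h₁ h₂ => hquiet u' h₁ (by omega)) (hquiet (u + 1) (by omega) le_rfl)

def IsHalfSplitting : Prop :=
  ∀ t x v₀ v₁, P.S t (x ++ [false]) = some v₀ → P.S t (x ++ [true]) = some v₁ →
    v₀.card = v₁.card

theorem card_mul_two_pow_length {t : ℕ} {x : List Bool} {v : Finset Ω}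
    (hP : P.IsHalfSplitting) (hx : P.S t x = some v) :
    v.card * 2 ^ x.length = Fintype.card Ω := by
  induction x using List.reverseRecOn generalizing v with
  | nil =>
    rw [P.stable 0 t [] Finset.univ t.zero_le P.root, Option.some_inj] at hx
    simp [← hx]
  | append_singleton y b ih =>
    obtain ⟨w, v', hw, hv', hdisj, rfl⟩ := P.exists_sibling hx
    have hcard : v.card = v'.card := by
      cases b
      · exact hP t y v v' hx hv'
      · exact (hP t y v' v hv' hx).symm
    rw [← ih hw, Finset.card_union_of_disjoint hdisj, ← hcard, List.length_append,
      List.length_singleton, pow_succ]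
    ring

end TPartitionRefinement

def Alive (P : TPartitionRefinement Ω) (ν : ℕ → List Bool → ℝ) (t : ℕ) (x : List Bool) : Prop :=
  P.Terminal t x ∧ ν t x < 2

theorem Alive.of_le {P : TPartitionRefinement Ω} {ν : ℕ → List Bool → ℝ} {t t' : ℕ}
    {x : List Bool} (hν : IsEvaluation ν) (h : Alive P ν t' x) (htt' : t ≤ t')
    (hx : (P.S t x).isSome) : Alive P ν t x := by
  have hnone : ∀ b, P.S t' (x ++ [b]) = none → P.S t (x ++ [b]) = none := fun b hb => by
    by_contra hne
    simpa [hb] using P.isSome_of_le htt' (Option.ne_none_iff_isSome.1 hne)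
  exact ⟨⟨hx, hnone _ h.1.2.1, hnone _ h.1.2.2⟩,
    (hν.2 t t' x x htt' List.prefix_rfl).trans_lt h.2⟩

theorem Good.exists_alive_not_alive {P : TPartitionRefinement Ω} {ν : ℕ → List Bool → ℝ}
    {N φ τ t : ℕ} {a : Ω} (hg : Good P ν N φ τ a) (hτt : τ < t)
    (hquiet : ∀ u, τ < u → u < t → ¬ SplitsOn P u a) (hev : Event P ν t a) :
    ∃ x v, P.S τ x = some v ∧ φ < v.card ∧ Alive P ν τ x ∧ ¬ Alive P ν t x := by
  obtain ⟨x, v, hx, hterm, ha, -, hφv, hν⟩ := hg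
  refine ⟨x, v, hx, hφv, ⟨hterm, hν⟩, fun hal => ?_⟩
  by_cases hs : SplitsOn P t a
  · exact P.not_terminal_of_splitsOn (P.stable τ (t - 1) x v (by omega) hx) ha hs hal.1
  obtain ⟨⟨y, w, hy, hty, haw, hνy⟩, -⟩ := hev.resolve_left hs
  have hxt := P.terminal_of_forall_not_splitsOn hx ha hterm hτt.le fun u h₁ h₂ => by
    rcases h₂.lt_or_eq with h₂ | rfl
    exacts [hquiet u h₁ h₂, hs]
  obtain rfl := P.eq_of_terminal_of_mem hy (P.stable τ t x v hτt.le hx) hty hxt haw ha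
  exact absurd hal.2 (not_lt.2 hνy.le)

section Counting

open Finset

theorem card_lt_two_pow_of_forall_length_le {t : Finset (List Bool)} {D : ℕ}
    (h : ∀ x ∈ t, x.length ≤ D) : #t < 2 ^ (D + 1) := by
  rw [card_eq_sum_card_fiberwise (f := List.length) (t := range (D + 1))
    fun x hx => mem_range.2 (Nat.lt_succ_of_le (h x hx))]
  calc ∑ d ∈ range (D + 1), #{x ∈ t | x.length = d}
      ≤ ∑ d ∈ range (D + 1), 2 ^ d :=
        sum_le_sum fun d _ => by simpa using card_filter_length_eq_le (T := t) (s := d)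
    _ < 2 ^ (D + 1) := Nat.geomSum_lt le_rfl fun d hd => mem_range.1 hd

theorem mul_card_le_of_forall_mul_two_pow_length_lt {t : Finset (List Bool)} {φ M : ℕ}
    (h : ∀ x ∈ t, φ * 2 ^ x.length < M) : φ * #t ≤ 2 * M := by
  rcases t.eq_empty_or_nonempty with rfl | ht
  · simp
  obtain ⟨x, hx, hsup⟩ := t.exists_mem_eq_sup ht List.length
  have hcard := card_lt_two_pow_of_forall_length_le fun y hy =>
    hsup ▸ le_sup (f := List.length) hy
  calc φ * #t ≤ φ * 2 ^ (x.length + 1) := Nat.mul_le_mul_left _ hcard.le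
    _ = 2 * (φ * 2 ^ x.length) := by ring
    _ ≤ 2 * M := Nat.mul_le_mul_left _ (h x hx).le

theorem mul_card_prod_le_of_forall_mul_two_pow_length_lt {β : Type*} [Fintype β]
    [DecidableEq β] {s : Finset (β × List Bool)} {φ M : ℕ}
    (h : ∀ p ∈ s, φ * 2 ^ p.2.length < M) : φ * #s ≤ Fintype.card β * (2 * M) := by
  have hsub : s ⊆ univ ×ˢ s.image Prod.snd := fun p hp => by simpa using ⟨p.1, hp⟩
  have himage : φ * #(s.image Prod.snd) ≤ 2 * M :=
    mul_card_le_of_forall_mul_two_pow_length_lt (by simpa using fun x b hb => h (b, x) hb)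
  calc φ * #s ≤ φ * (Fintype.card β * #(s.image Prod.snd)) := by
        simpa using Nat.mul_le_mul_left φ (card_le_card hsub)
    _ = Fintype.card β * (φ * #(s.image Prod.snd)) := by ring
    _ ≤ Fintype.card β * (2 * M) := Nat.mul_le_mul_left _ himage

end Counting

section Charging

variable {β : Type*} {m : ℕ} {P : β → TPartitionRefinement Ω} {ν : β → ℕ → List Bool → ℝ}
  {σ : Fin (m + 1) → ℕ} {c : Fin m → β × List Bool}

theorem injective_of_alive_of_not_alive (hν : ∀ b, IsEvaluation (ν b)) (hσ : Monotone σ)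
    (halive : ∀ i, Alive (P (c i).1) (ν (c i).1) (σ i.castSucc) (c i).2)
    (hdead : ∀ i, ¬ Alive (P (c i).1) (ν (c i).1) (σ i.succ) (c i).2) :
    Function.Injective c := by
  refine Function.Injective.of_lt_imp_ne fun i j hij hc => hdead i ?_
  have hdefined := (P _).isSome_of_le (hσ (Fin.castSucc_le_succ i)) (halive i).1.1
  exact (hc ▸ halive j).of_le (hν _) (hσ (Fin.succ_le_castSucc_iff.2 hij)) hdefined

theorem mul_le_of_alive_of_not_alive [Fintype β] [DecidableEq β] {φ : ℕ}
    (hν : ∀ b, IsEvaluation (ν b)) (hP : ∀ b, (P b).IsHalfSplitting) (hσ : Monotone σ)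
    (hlarge : ∀ i, ∃ v, (P (c i).1).S (σ i.castSucc) (c i).2 = some v ∧ φ < v.card)
    (halive : ∀ i, Alive (P (c i).1) (ν (c i).1) (σ i.castSucc) (c i).2)
    (hdead : ∀ i, ¬ Alive (P (c i).1) (ν (c i).1) (σ i.succ) (c i).2) :
    φ * m ≤ Fintype.card β * (2 * Fintype.card Ω) := by
  have hcount := mul_card_prod_le_of_forall_mul_two_pow_length_lt
    (s := Finset.univ.image c) (φ := φ) (M := Fintype.card Ω) <| by
      simp only [Finset.mem_image, Finset.mem_univ, true_and, forall_exists_index,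
        forall_apply_eq_imp_iff]
      intro i
      obtain ⟨v, hv, hφv⟩ := hlarge i
      rw [← (P _).card_mul_two_pow_length (hP _) hv]
      exact Nat.mul_lt_mul_of_pos_right hφv (by positivity)
  rwa [Finset.card_image_of_injective _ (injective_of_alive_of_not_alive hν hσ halive hdead),
    Finset.card_univ, Fintype.card_fin] at hcount

end Charging

theorem stmt4_general {Ω : Type*} [Fintype Ω] [DecidableEq Ω] (ℓ N φ k : ℕ) (hφ : 0 < φ)
    (hΩ : Fintype.card Ω = 2 ^ ℓ)
    (PA PB : TPartitionRefinement Ω) (νA νB : ℕ → List Bool → ℝ)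
    (hνA : IsEvaluation νA) (hνB : IsEvaluation νB)
    (hhalfA : ∀ t x v₀ v₁, PA.S t (x ++ [false]) = some v₀ →
      PA.S t (x ++ [true]) = some v₁ → v₀.card = v₁.card)
    (hhalfB : ∀ t x v₀ v₁, PB.S t (x ++ [false]) = some v₀ →
      PB.S t (x ++ [true]) = some v₁ → v₀.card = v₁.card)
    (s : Fin k → Ω) (τ : Fin (k + 1) → ℕ)
    (hgood : ∀ i : Fin k, Good2 PA PB νA νB N φ (τ i.castSucc) (s i))
    (hstale : ∀ i : Fin k, (i : ℕ) + 1 < k →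
      StaleAfterAt PA PB νA νB (τ i.castSucc) (τ i.succ) (s i)) :
    (k : ℝ) ≤ 6 * ((2 : ℝ) ^ ℓ / φ) := by
  obtain _ | m := k
  · simp only [CharP.cast_eq_zero]
    positivity
  let P : Bool → TPartitionRefinement Ω := fun b => cond b PB PA
  let ν : Bool → ℕ → List Bool → ℝ := fun b => cond b νB νA
  have hstale' (i : Fin m) := hstale i.castSucc (by simp)
  simp only [Fin.succ_castSucc] at hstale'
  have hcharge (i : Fin m) : ∃ p : Bool × List Bool,
      (∃ v, (P p.1).S (τ i.castSucc.castSucc) p.2 = some v ∧ φ < v.card) ∧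
      Alive (P p.1) (ν p.1) (τ i.castSucc.castSucc) p.2 ∧
      ¬ Alive (P p.1) (ν p.1) (τ i.succ.castSucc) p.2 := by
    obtain ⟨hlt, hev | hev, hquiet⟩ := hstale' i
    · obtain ⟨x, v, hx, hφv, hal, hdead⟩ := (hgood i.castSucc).1.exists_alive_not_alive hlt
        (fun u h₁ h₂ hs => hquiet u h₁ h₂ (.inl (.inl hs))) hev
      exact ⟨(false, x), ⟨v, hx, hφv⟩, hal, hdead⟩
    · obtain ⟨x, v, hx, hφv, hal, hdead⟩ := (hgood i.castSucc).2.exists_alive_not_alive hlt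
        (fun u h₁ h₂ hs => hquiet u h₁ h₂ (.inr (.inl hs))) hev
      exact ⟨(true, x), ⟨v, hx, hφv⟩, hal, hdead⟩
  choose c hlarge halive hdead using hcharge
  have hcount := mul_le_of_alive_of_not_alive (P := P) (ν := ν) (σ := fun j => τ j.castSucc)
    (fun b => by cases b <;> assumption) (fun b => by cases b <;> assumption)
    (Fin.monotone_iff_le_succ.2 fun i => (hstale' i).1.le) hlarge halive hdead
  rw [Fintype.card_bool, hΩ] at hcount
  obtain ⟨_, v, -, -, -, -, hφv, -⟩ := (hgood 0).1
  have hφΩ : φ ≤ 2 ^ ℓ := hΩ ▸ hφv.le.trans (Finset.card_le_univ v)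
  have hφR : (0 : ℝ) < φ := by exact_mod_cast hφ
  have hcountR : (φ : ℝ) * m ≤ 2 * (2 * 2 ^ ℓ) := by exact_mod_cast hcount
  have hφΩR : (φ : ℝ) ≤ 2 ^ ℓ := by exact_mod_cast hφΩ
  rw [mul_div_assoc', le_div_iff₀ hφR]
  push_cast
  linarith

/-- If moreover both partition refinements are half-splitting (every split produces
two parts of equal cardinality), then an `(N,φ)`-sequence has at most
`6 * (2^ℓ / φ)` elements. -/
theorem stmt4 {Ω : Type*} [Fintype Ω] [DecidableEq Ω] (ℓ N φ k : ℕ) (hφ : 0 < φ)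
    (hΩ : Fintype.card Ω = 2 ^ ℓ)
    (PA PB : TPartitionRefinement Ω) (νA νB : ℕ → List Bool → ℝ)
    (hνA : IsEvaluation νA) (hνB : IsEvaluation νB)
    (hhalfA : ∀ t x v₀ v₁, PA.S t (x ++ [false]) = some v₀ →
      PA.S t (x ++ [true]) = some v₁ → v₀.card = v₁.card)
    (hhalfB : ∀ t x v₀ v₁, PB.S t (x ++ [false]) = some v₀ →
      PB.S t (x ++ [true]) = some v₁ → v₀.card = v₁.card)
    (s : Fin k → Ω) (τ : Fin (k + 1) → ℕ) (hτ0 : τ 0 = 0)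
    (hgood : ∀ i : Fin k, Good2 PA PB νA νB N φ (τ i.castSucc) (s i))
    (hstale : ∀ i : Fin k, (i : ℕ) + 1 < k →
      StaleAfterAt PA PB νA νB (τ i.castSucc) (τ i.succ) (s i)) :
    (k : ℝ) ≤ 6 * ((2 : ℝ) ^ ℓ / φ) :=
  stmt4_general ℓ N φ k hφ hΩ PA PB νA νB hνA hνB hhalfA hhalfB s τ hgood hstale
end

section
/- Let S be a partition refinement of Cantor space with clopen parts and fix a time t. If K and L are finite sets of positions such that every restriction with domain K is elementary at t and every restriction with domain L is elementary at t, then every restriction with domain K ∩ L is elementary at t. Consequently there is a unique minimal finite set of positions K(S,t) such that all restrictions with domain K(S,t) are elementary at t. -/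
/-- A time-indexed partition refinement of Cantor space `ℕ → Bool` all of whose
parts are clopen, with finitely many coordinates defined at each time. -/
structure CantorPR where
  S : ℕ → List Bool → Option (Set (ℕ → Bool))
  root : S 0 [] = some Set.univ
  stable : ∀ t t' x v, t ≤ t' → S t x = some v → S t' x = some v
  nonempty : ∀ t x v, S t x = some v → v.Nonempty
  clopen : ∀ t x v, S t x = some v → IsClopen v
  finite : ∀ t, {x : List Bool | (S t x).isSome}.Finite
  children : ∀ t x, (S t (x ++ [false])).isSome →
      (S t (x ++ [true])).isSome ∧ (S (t - 1) x).isSome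
  children' : ∀ t x, (S t (x ++ [true])).isSome →
      (S t (x ++ [false])).isSome ∧ (S (t - 1) x).isSome
  split : ∀ t x v v₀ v₁, S t x = some v → S t (x ++ [false]) = some v₀ →
    S t (x ++ [true]) = some v₁ → Disjoint v₀ v₁ ∧ v₀ ∪ v₁ = v

/-- A coordinate is terminal at time `t` if its part is defined but neither child is. -/
def CantorPR.Terminal (P : CantorPR) (t : ℕ) (x : List Bool) : Prop :=
  (P.S t x).isSome ∧ P.S t (x ++ [false]) = none ∧ P.S t (x ++ [true]) = none

/-- The restriction with finite domain `K` given by the values of `r` on `K` is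
elementary at `t`: the set of sequences agreeing with `r` on `K` is contained in a
single terminal part. -/
def CantorPR.Elementary (P : CantorPR) (t : ℕ) (K : Finset ℕ) (r : ℕ → Bool) : Prop :=
  ∃ x v, P.S t x = some v ∧ P.Terminal t x ∧
    {σ : ℕ → Bool | ∀ p ∈ K, σ p = r p} ⊆ v

namespace CantorPR
variable (P : CantorPR) (t : ℕ)

/-- both children defined if one is -/
lemma both_children {x : List Bool} {b : Bool} (h : (P.S t (x ++ [b])).isSome) :
    (P.S t (x ++ [false])).isSome ∧ (P.S t (x ++ [true])).isSome := by
  cases b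
  · exact ⟨h, (P.children t x h).1⟩
  · exact ⟨(P.children' t x h).1, h⟩

lemma parent_isSome {x : List Bool} {b : Bool} (h : (P.S t (x ++ [b])).isSome) :
    (P.S t x).isSome := by
  have h2 : (P.S (t-1) x).isSome := by
    cases b
    · exact (P.children t x h).2
    · exact (P.children' t x h).2
  obtain ⟨v, hv⟩ := Option.isSome_iff_exists.1 h2
  exact Option.isSome_iff_exists.2 ⟨v, P.stable (t-1) t x v (Nat.sub_le t 1) hv⟩

lemma prefix_isSome {x y : List Bool} (h : (P.S t (x ++ y)).isSome) :
    (P.S t x).isSome := by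
  induction y using List.reverseRecOn with
  | nil => simpa using h
  | append_singleton y b ih =>
    rw [← List.append_assoc] at h
    exact ih (P.parent_isSome t h)

lemma child_subset {x : List Bool} {b : Bool} {v w : Set (ℕ → Bool)}
    (hv : P.S t x = some v) (hw : P.S t (x ++ [b]) = some w) : w ⊆ v := by
  have hb := P.both_children t (x := x) (b := b) (by rw [hw]; rfl)
  obtain ⟨v₀, hv₀⟩ := Option.isSome_iff_exists.1 hb.1
  obtain ⟨v₁, hv₁⟩ := Option.isSome_iff_exists.1 hb.2
  have hs := (P.split t x v v₀ v₁ hv hv₀ hv₁).2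
  cases b
  · rw [hw] at hv₀; cases hv₀; rw [← hs]; exact Set.subset_union_left
  · rw [hw] at hv₁; cases hv₁; rw [← hs]; exact Set.subset_union_right

lemma ext_subset {x y : List Bool} {v w : Set (ℕ → Bool)}
    (hv : P.S t x = some v) (hw : P.S t (x ++ y) = some w) : w ⊆ v := by
  induction y using List.reverseRecOn generalizing w with
  | nil => simp at hw; rw [hv] at hw; cases hw; rfl
  | append_singleton y b ih =>
    rw [← List.append_assoc] at hw
    have hp : (P.S t (x ++ y)).isSome := P.parent_isSome t (by rw [hw]; rfl)
    obtain ⟨u, hu⟩ := Option.isSome_iff_exists.1 hp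
    exact (P.child_subset t hu hw).trans (ih hu)

lemma sibling_disjoint {x : List Bool} {v₀ v₁ : Set (ℕ → Bool)}
    (h0 : P.S t (x ++ [false]) = some v₀) (h1 : P.S t (x ++ [true]) = some v₁) :
    Disjoint v₀ v₁ := by
  obtain ⟨v, hv⟩ := Option.isSome_iff_exists.1
    (P.parent_isSome t (x := x) (b := false) (by rw [h0]; rfl))
  exact (P.split t x v v₀ v₁ hv h0 h1).1


lemma splitPoint : ∀ (x y : List Bool), ¬ x <+: y → ¬ y <+: x →
    ∃ z b, (z ++ [b]) <+: x ∧ (z ++ [!b]) <+: y := by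
  intro x
  induction x with
  | nil => intro y h _; exact absurd (List.nil_prefix) h
  | cons a x ih =>
    intro y h h'
    cases y with
    | nil => exact absurd (List.nil_prefix) h'
    | cons c y =>
      by_cases hac : a = c
      · subst hac
        obtain ⟨z, b, hz1, hz2⟩ := ih y (fun hp => h (List.cons_prefix_cons.mpr ⟨rfl, hp⟩))
          (fun hp => h' (List.cons_prefix_cons.mpr ⟨rfl, hp⟩))
        exact ⟨a :: z, b, by simpa using hz1, by simpa using hz2⟩
      · refine ⟨[], a, by simp, ?_⟩
        have : c = !a := by
          cases a <;> cases c <;> simp_all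
        simp [this]

lemma not_prefix_of_terminal {x y : List Bool} (hx : P.Terminal t x)
    (hy : (P.S t y).isSome) (hne : x ≠ y) : ¬ x <+: y := by
  rintro ⟨z, rfl⟩
  cases z with
  | nil => exact hne (by simp)
  | cons b z =>
    have : (P.S t (x ++ [b])).isSome := by
      have := P.prefix_isSome t (x := x ++ [b]) (y := z) (by simpa using hy)
      exact this
    cases b
    · rw [hx.2.1] at this; simp at this
    · rw [hx.2.2] at this; simp at this

lemma terminal_disjoint {x y : List Bool} {v w : Set (ℕ → Bool)}
    (hx : P.Terminal t x) (hy : P.Terminal t y) (hne : x ≠ y)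
    (hv : P.S t x = some v) (hw : P.S t y = some w) : Disjoint v w := by
  have h1 : ¬ x <+: y := P.not_prefix_of_terminal t hx (by rw [hw]; rfl) hne
  have h2 : ¬ y <+: x := P.not_prefix_of_terminal t hy (by rw [hv]; rfl) hne.symm
  obtain ⟨z, b, ⟨x', rfl⟩, ⟨y', rfl⟩⟩ := splitPoint x y h1 h2
  have hx0 : (P.S t (z ++ [b] ++ x')).isSome := by rw [hv]; rfl
  have hx1 : (P.S t (z ++ [!b] ++ y')).isSome := by rw [hw]; rfl
  obtain ⟨u₀, hu₀⟩ := Option.isSome_iff_exists.1 (P.prefix_isSome t hx0)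
  obtain ⟨u₁, hu₁⟩ := Option.isSome_iff_exists.1 (P.prefix_isSome t hx1)
  have hvw : v ⊆ u₀ := P.ext_subset t (y := x') hu₀ hv
  have hww : w ⊆ u₁ := P.ext_subset t (y := y') hu₁ hw
  have : Disjoint u₀ u₁ := by
    cases b
    · exact P.sibling_disjoint t hu₀ hu₁
    · exact (P.sibling_disjoint t hu₁ hu₀).symm
  exact this.mono hvw hww

lemma cover (σ : ℕ → Bool) : ∃ x v, P.S t x = some v ∧ P.Terminal t x ∧ σ ∈ v := by
  obtain ⟨N, hN⟩ := (Set.Finite.image List.length (P.finite t)).bddAbove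
  have hlen : ∀ x : List Bool, (P.S t x).isSome → x.length ≤ N := by
    intro x hx
    exact hN (Set.mem_image_of_mem _ hx)
  have aux : ∀ n (x : List Bool) (v : Set (ℕ → Bool)), P.S t x = some v → σ ∈ v →
      N < x.length + n → ∃ y w, P.S t y = some w ∧ P.Terminal t y ∧ σ ∈ w := by
    intro n
    induction n with
    | zero =>
      intro x v hv _ hlt
      simp at hlt
      exact absurd (hlen x (by rw [hv]; rfl)) (not_le.2 hlt)
    | succ n ih =>
      intro x v hv hσ hlt
      by_cases hterm : P.Terminal t x
      · exact ⟨x, v, hv, hterm, hσ⟩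
      · have hsome : (P.S t x).isSome := by rw [hv]; rfl
        have hch : (P.S t (x ++ [false])).isSome ∧ (P.S t (x ++ [true])).isSome := by
          unfold CantorPR.Terminal at hterm
          push_neg at hterm
          rcases Option.eq_none_or_eq_some (P.S t (x ++ [false])) with h | ⟨w, h⟩
          · rcases Option.eq_none_or_eq_some (P.S t (x ++ [true])) with h' | ⟨w', h'⟩
            · exact absurd h' (hterm hsome h)
            · exact P.both_children t (b := true) (by rw [h']; rfl)
          · exact P.both_children t (b := false) (by rw [h]; rfl)
        obtain ⟨v₀, hv₀⟩ := Option.isSome_iff_exists.1 hch.1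
        obtain ⟨v₁, hv₁⟩ := Option.isSome_iff_exists.1 hch.2
        have hsp := (P.split t x v v₀ v₁ hv hv₀ hv₁).2
        have hσ' : σ ∈ v₀ ∪ v₁ := by rw [hsp]; exact hσ
        rcases hσ' with h | h
        · exact ih (x ++ [false]) v₀ hv₀ h (by simp only [List.length_append, List.length_cons, List.length_nil]; omega)
        · exact ih (x ++ [true]) v₁ hv₁ h (by simp only [List.length_append, List.length_cons, List.length_nil]; omega)
  have hroot : P.S t [] = some Set.univ := P.stable 0 t [] _ (Nat.zero_le t) P.root
  exact aux (N + 1) [] Set.univ hroot (Set.mem_univ σ) (by simp)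


/-- open sets in Cantor space contain a cylinder around each point -/
lemma open_cylinder {s : Set (ℕ → Bool)} (hs : IsOpen s) {ρ : ℕ → Bool} (hρ : ρ ∈ s) :
    ∃ I : Finset ℕ, {τ : ℕ → Bool | ∀ p ∈ I, τ p = ρ p} ⊆ s := by
  obtain ⟨I, u, hu, hsub⟩ := isOpen_pi_iff.1 hs ρ hρ
  refine ⟨I, fun τ hτ => hsub fun i hi => ?_⟩
  have : τ i = ρ i := hτ i hi
  rw [this]
  exact (hu i hi).2

lemma clopen_det {v : Set (ℕ → Bool)} (hv : IsClopen v) :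
    ∃ D : Finset ℕ, ∀ σ τ : ℕ → Bool, σ ∈ v → (∀ p ∈ D, τ p = σ p) → τ ∈ v := by
  classical
  have h1 : ∀ ρ : ℕ → Bool, ∃ I : Finset ℕ,
      {τ : ℕ → Bool | ∀ p ∈ I, τ p = ρ p} ⊆ v ∨
      {τ : ℕ → Bool | ∀ p ∈ I, τ p = ρ p} ⊆ vᶜ := by
    intro ρ
    by_cases hρ : ρ ∈ v
    · obtain ⟨I, hI⟩ := open_cylinder hv.2 hρ
      exact ⟨I, Or.inl hI⟩
    · obtain ⟨I, hI⟩ := open_cylinder hv.1.isOpen_compl hρ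
      exact ⟨I, Or.inr hI⟩
  choose I hI using h1
  -- the cylinders are open and cover univ
  have hopen : ∀ ρ : ℕ → Bool, IsOpen {τ : ℕ → Bool | ∀ p ∈ (I ρ), τ p = ρ p} := by
    intro ρ
    have : {τ : ℕ → Bool | ∀ p ∈ (I ρ), τ p = ρ p} =
        Set.pi (I ρ : Set ℕ) (fun i => {ρ i}) := by
      ext τ; simp [Set.mem_pi]
    rw [this]
    exact isOpen_set_pi (I ρ).finite_toSet (fun i _ => isOpen_discrete _)
  obtain ⟨s, hs⟩ := (isCompact_univ (X := ℕ → Bool)).elim_finite_subcover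
    (fun ρ : ℕ → Bool => {τ : ℕ → Bool | ∀ p ∈ (I ρ), τ p = ρ p}) hopen
    (fun σ _ => Set.mem_iUnion.2 ⟨σ, fun p _ => rfl⟩)
  refine ⟨s.biUnion I, fun σ τ hσ hτ => ?_⟩
  have : σ ∈ ⋃ ρ ∈ s, {τ : ℕ → Bool | ∀ p ∈ (I ρ), τ p = ρ p} := hs (Set.mem_univ σ)
  simp only [Set.mem_iUnion] at this
  obtain ⟨ρ, hρs, hσρ⟩ := this
  have hτρ : τ ∈ {τ : ℕ → Bool | ∀ p ∈ (I ρ), τ p = ρ p} := by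
    intro p hp
    rw [hτ p (Finset.mem_biUnion.2 ⟨ρ, hρs, hp⟩)]
    exact hσρ p hp
  rcases hI ρ with h | h
  · exact h hτρ
  · exact absurd hσ (h hσρ)

lemma same_terminal {x y : List Bool} {v w : Set (ℕ → Bool)} {ρ : ℕ → Bool}
    (hx : P.Terminal t x) (hy : P.Terminal t y)
    (hv : P.S t x = some v) (hw : P.S t y = some w) (h1 : ρ ∈ v) (h2 : ρ ∈ w) :
    x = y ∧ v = w := by
  by_cases hne : x = y
  · subst hne; rw [hv] at hw; exact ⟨rfl, Option.some.inj hw⟩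
  · exact absurd h2 (Set.disjoint_left.1 (P.terminal_disjoint t hx hy hne hv hw) h1)

lemma inter_elem {K L : Finset ℕ} (hK : ∀ r : ℕ → Bool, P.Elementary t K r)
    (hL : ∀ r : ℕ → Bool, P.Elementary t L r) (r : ℕ → Bool) :
    P.Elementary t (K ∩ L) r := by
  classical
  obtain ⟨x, v, hv, hxt, hvsub⟩ := hK r
  refine ⟨x, v, hv, hxt, fun τ hτ => ?_⟩
  simp only [Set.mem_setOf_eq] at hτ
  have hr : r ∈ v := hvsub (fun p _ => rfl)
  set ρ : ℕ → Bool := fun p => if p ∈ K then r p else τ p with hρdef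
  have hρv : ρ ∈ v := hvsub (fun p hp => by simp [hρdef, hp])
  obtain ⟨y, w, hw, hyt, hwsub⟩ := hL ρ
  have hρw : ρ ∈ w := hwsub (fun p _ => rfl)
  have hτw : τ ∈ w := by
    refine hwsub (fun p hp => ?_)
    by_cases hpK : p ∈ K
    · have : τ p = r p := hτ p (Finset.mem_inter.2 ⟨hpK, hp⟩)
      simp [hρdef, hpK, this]
    · simp [hρdef, hpK]
  have := P.same_terminal t hxt hyt hv hw hρv hρw
  rw [this.2]
  exact hτw

lemma exists_elem_domain : ∃ K : Finset ℕ, ∀ r : ℕ → Bool, P.Elementary t K r := by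
  classical
  have hDex : ∀ x : List Bool, ∃ D : Finset ℕ, ∀ v, P.S t x = some v →
      ∀ σ τ : ℕ → Bool, σ ∈ v → (∀ p ∈ D, τ p = σ p) → τ ∈ v := by
    intro x
    rcases Option.eq_none_or_eq_some (P.S t x) with h | ⟨v, h⟩
    · exact ⟨∅, fun v hv => by rw [h] at hv; cases hv⟩
    · obtain ⟨D, hD⟩ := clopen_det (P.clopen t x v h)
      exact ⟨D, fun v' hv' => by rw [h] at hv'; cases (Option.some.inj hv'); exact hD⟩
  choose D hD using hDex
  refine ⟨(P.finite t).toFinset.biUnion D, fun r => ?_⟩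
  obtain ⟨x, v, hv, hxt, hrv⟩ := P.cover t r
  refine ⟨x, v, hv, hxt, fun τ hτ => ?_⟩
  simp only [Set.mem_setOf_eq] at hτ
  have hxF : x ∈ (P.finite t).toFinset := (Set.Finite.mem_toFinset _).2 (show (P.S t x).isSome by rw [hv]; rfl)
  exact hD x v hv r τ hrv (fun p hp => hτ p (Finset.mem_biUnion.2 ⟨x, hxF, hp⟩))

end CantorPR


/-- If all restrictions with domain `K` are elementary at `t` and likewise for `L`,
then all restrictions with domain `K ∩ L` are elementary at `t`; consequently there
is a unique minimal finite set of positions all of whose restrictions are elementary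
at `t`. -/
theorem stmt6 (P : CantorPR) (t : ℕ) :
    (∀ K L : Finset ℕ, (∀ r : ℕ → Bool, P.Elementary t K r) →
      (∀ r : ℕ → Bool, P.Elementary t L r) →
      ∀ r : ℕ → Bool, P.Elementary t (K ∩ L) r) ∧
    (∃! K : Finset ℕ, (∀ r : ℕ → Bool, P.Elementary t K r) ∧
      ∀ L : Finset ℕ, (∀ r : ℕ → Bool, P.Elementary t L r) → K ⊆ L) := by
  classical
  refine ⟨fun K L hK hL r => P.inter_elem t hK hL r, ?_⟩
  obtain ⟨K₀, hK₀⟩ := P.exists_elem_domain t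
  set T : Finset (Finset ℕ) :=
    K₀.powerset.filter (fun K => ∀ r : ℕ → Bool, P.Elementary t K r) with hT
  have hK₀T : K₀ ∈ T := by
    simp only [hT, Finset.mem_filter, Finset.mem_powerset]
    exact ⟨subset_rfl, hK₀⟩
  obtain ⟨Km, hKmT, hKmin⟩ := T.exists_min_image Finset.card ⟨K₀, hK₀T⟩
  simp only [hT, Finset.mem_filter, Finset.mem_powerset] at hKmT
  have hmin : ∀ L : Finset ℕ, (∀ r : ℕ → Bool, P.Elementary t L r) → Km ⊆ L := by
    intro L hL
    have hKL : ∀ r : ℕ → Bool, P.Elementary t (Km ∩ L) r :=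
      fun r => P.inter_elem t hKmT.2 hL r
    have hKLT : Km ∩ L ∈ T := by
      simp only [hT, Finset.mem_filter, Finset.mem_powerset]
      exact ⟨(Finset.inter_subset_left).trans hKmT.1, hKL⟩
    have hcard := hKmin _ hKLT
    have heq : Km ∩ L = Km :=
      Finset.eq_of_subset_of_card_le Finset.inter_subset_left hcard
    rw [← heq]
    exact Finset.inter_subset_right
  refine ⟨Km, ⟨hKmT.2, hmin⟩, ?_⟩
  rintro K ⟨hK1, hK2⟩
  exact Finset.Subset.antisymm (hK2 Km hKmT.2) (hmin K hK1)
end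

section
/- Let Ω be Cantor space and suppose a part v of a Kolmogorov–Loveland partition refinement (all parts are of the form [r] for restrictions r) with v = [r] is split into two parts v₀, v₁ forming a partition of v, where v₀ = [r₀] and v₁ = [r₁] with r₀, r₁ extending r. Then r₀ and r₁ each restrict exactly one position more than r, this position is the same for both, and r₀, r₁ assign different values to it. -/
/-- The set of infinite binary sequences consistent with the restriction `r`
(a partial function from positions to bits). -/
def consistentSet (r : ℕ → Option Bool) : Set (ℕ → Bool) :=
  {σ | ∀ p b, r p = some b → σ p = b}

/-- Concatenation of two restrictions (with disjoint domains): use `r₁` where it is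
defined, else `r₂`. -/
def concatR (r₁ r₂ : ℕ → Option Bool) : ℕ → Option Bool :=
  fun p => match r₁ p with
  | some b => some b
  | none => r₂ p

/-- If a part `[r]` of a Kolmogorov–Loveland partition refinement is split into a
partition `[r₀] ⊔ [r₁]` of `[r]`, with `r₀, r₁` extending `r`, then `r₀` and `r₁`
each restrict exactly one position more than `r`, that position is the same for
both and not restricted by `r`, and they assign opposite values to it. -/
theorem stmt14 (r r₀ r₁ : ℕ → Option Bool)
    (hfin : {p | (r p).isSome}.Finite)
    (hfin₀ : {p | (r₀ p).isSome}.Finite) (hfin₁ : {p | (r₁ p).isSome}.Finite)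
    (hext₀ : ∀ p b, r p = some b → r₀ p = some b)
    (hext₁ : ∀ p b, r p = some b → r₁ p = some b)
    (hne₀ : (consistentSet r₀).Nonempty) (hne₁ : (consistentSet r₁).Nonempty)
    (hdisj : Disjoint (consistentSet r₀) (consistentSet r₁))
    (hunion : consistentSet r₀ ∪ consistentSet r₁ = consistentSet r) :
    ∃ p b, r p = none ∧ r₀ p = some b ∧ r₁ p = some (!b) ∧
      ∀ q, q ≠ p → r₀ q = r q ∧ r₁ q = r q := by
  by_cases hP : ∃ p b b', r₀ p = some b ∧ r₁ p = some b' ∧ b ≠ b'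
  · obtain ⟨p, b, b', h0, h1, hbb⟩ := hP
    have hb' : b' = !b := by
      cases b <;> cases b' <;> first | rfl | exact absurd rfl hbb
    subst hb'
    have hrp : r p = none := by
      cases hr : r p with
      | none => rfl
      | some c =>
        have e0 := hext₀ p c hr
        have e1 := hext₁ p c hr
        rw [h0] at e0; rw [h1] at e1
        simp_all
    refine ⟨p, b, hrp, h0, h1, ?_⟩
    intro q hq
    constructor
    · cases h0q : r₀ q with
      | none =>
        cases hrq : r q with
        | none => rfl
        | some c => have := hext₀ q c hrq; simp_all
      | some c =>
        cases hrq : r q with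
        | some d => have := hext₀ q d hrq; simp_all
        | none =>
          exfalso
          obtain ⟨τ, hτ⟩ := hne₀
          have hσr : Function.update τ q (!c) ∈ consistentSet r := by
            intro x bx hx
            have hxq : x ≠ q := by rintro rfl; simp_all
            rw [Function.update_of_ne hxq]
            exact hτ x bx (hext₀ x bx hx)
          rw [← hunion] at hσr
          cases hσr with
          | inl h =>
            have := h q c h0q
            simp at this
          | inr h =>
            have h2 := h p (!b) h1
            rw [Function.update_of_ne (Ne.symm hq)] at h2
            have h3 := hτ p b h0
            rw [h3] at h2
            simp at h2
    · cases h1q : r₁ q with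
      | none =>
        cases hrq : r q with
        | none => rfl
        | some c => have := hext₁ q c hrq; simp_all
      | some c =>
        cases hrq : r q with
        | some d => have := hext₁ q d hrq; simp_all
        | none =>
          exfalso
          obtain ⟨τ, hτ⟩ := hne₁
          have hσr : Function.update τ q (!c) ∈ consistentSet r := by
            intro x bx hx
            have hxq : x ≠ q := by rintro rfl; simp_all
            rw [Function.update_of_ne hxq]
            exact hτ x bx (hext₁ x bx hx)
          rw [← hunion] at hσr
          cases hσr with
          | inr h =>
            have := h q c h1q
            simp at this
          | inl h =>
            have h2 := h p b h0
            rw [Function.update_of_ne (Ne.symm hq)] at h2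
            have h3 := hτ p (!b) h1
            rw [h3] at h2
            simp at h2
  · exfalso
    push_neg at hP
    set σ : ℕ → Bool := fun p => (concatR r₀ r₁ p).getD false with hσ
    have h0 : σ ∈ consistentSet r₀ := by
      intro p b hb
      simp [hσ, concatR, hb]
    have h1 : σ ∈ consistentSet r₁ := by
      intro p b hb
      cases h0p : r₀ p with
      | none => simp [hσ, concatR, h0p, hb]
      | some c =>
        have : c = b := hP p c b h0p hb
        simp [hσ, concatR, h0p, this]
    exact Set.disjoint_left.mp hdisj h0 h1
end
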